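/- arXiv:2005.10131 — 3 statements merged into one kernel-verified Lean document; each statement's English description precedes it below -/
import Mathlib

section
/- Without the C-compatibility hypothesis, the can-explain relation ⪰_C is not transitive: there exist acyclic causal models with focus N1, N2, N3 such that N1 ⪰_C N2 and N2 ⪰_C N3 but not N1 ⪰_C N3. -/
open scoped Classical

/-- A causal model with focus: exogenous variables `U`, endogenous variables `V`,
range function `R`, structural equations `F` (the value of an endogenous variable
given the values of all other variables), and focus function `G`. -/
structure CModel where
  U : Set ℕ
  V : Set ℕ
  R : ℕ → Set ℕ
  F : ℕ → (ℕ → ℕ) → ℕ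
  G : ℕ → Set ℕ

namespace CModel

def vars (M : CModel) : Set ℕ := M.U ∪ M.V

/-- A context: an assignment giving each exogenous variable a value in its range. -/
def Ctx (M : CModel) (u : ℕ → ℕ) : Prop := ∀ v ∈ M.U, u v ∈ M.R v

/-- `s` solves the equations of `M` in context `u` under the intervention setting
the variables in `X` to the values given by `x`. -/
def solves (M : CModel) (u : ℕ → ℕ) (X : Set ℕ) (x : ℕ → ℕ) (s : ℕ → ℕ) : Prop :=
  (∀ v ∈ X, s v = x v) ∧ (∀ v ∈ M.U, v ∉ X → s v = u v) ∧
  (∀ v ∈ M.V, v ∉ X → s v = M.F v s)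

/-- `(M,u) ⊨ [X ← x](C = c)`. -/
def sat (M : CModel) (u : ℕ → ℕ) (X : Set ℕ) (x : ℕ → ℕ) (C c : ℕ) : Prop :=
  ∃ s, solves M u X x s ∧ s C = c

/-- `B` is a parent of `C`: some change in `B`'s value (holding all others fixed)
changes `C`'s value. -/
def isParent (M : CModel) (B C : ℕ) : Prop :=
  B ≠ C ∧ B ∈ vars M ∧ C ∈ M.V ∧
  ∃ s b1 b2, b1 ∈ M.R B ∧ b2 ∈ M.R B ∧
    M.F C (Function.update s B b1) ≠ M.F C (Function.update s B b2)

def Par (M : CModel) (C : ℕ) : Set ℕ := {B | isParent M B C}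

/-- Acyclicity: the parent graph has no directed cycle. -/
def Acyclic (M : CModel) : Prop :=
  ∀ v, ¬ Relation.TransGen (fun a b => isParent M a b) v v

/-- Well-formedness of a causal model with focus. -/
def WF (M : CModel) : Prop :=
  M.U.Finite ∧ M.V.Finite ∧ M.U.Nonempty ∧ M.V.Nonempty ∧ Disjoint M.U M.V ∧
  (∀ v ∈ vars M, (M.R v).Finite ∧ 1 < (M.R v).ncard) ∧
  (∀ C, C ∉ M.G C) ∧ (∀ C ∈ vars M, M.G C ⊆ vars M) ∧
  (∀ C ∈ M.V, Par M C ⊆ M.G C)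

/-- `M1 ⪰_C M2`: `M1` can explain `M2` with respect to `C`. -/
def canExplain (M1 M2 : CModel) (C : ℕ) : Prop :=
  M1.R C = M2.R C ∧ M2.G C ⊆ M1.G C ∧
  ∀ u2 x c, Ctx M2 u2 → (∀ v ∈ M2.G C, x v ∈ M2.R v) →
    sat M2 u2 (M2.G C) x C c →
    ∃ u1, Ctx M1 u1 ∧ sat M1 u1 (M2.G C) x C c

/-- Compatibility: for every shared variable, one model can explain the other. -/
def compatible (M1 M2 : CModel) : Prop :=
  ∀ C ∈ vars M1 ∩ vars M2, canExplain M1 M2 C ∨ canExplain M2 M1 C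

/-- `M1 ≡_C M2`: the two models agree on `C`'s status, range, focus set, and
(if endogenous) structural equation. -/
def equivC (M1 M2 : CModel) (C : ℕ) : Prop :=
  (C ∈ M1.U ∧ C ∈ M2.U ∧ M1.R C = M2.R C ∧ M1.G C = M2.G C) ∨
  (C ∈ M1.V ∧ C ∈ M2.V ∧ M1.R C = M2.R C ∧ M1.G C = M2.G C ∧
    Par M1 C = Par M2 C ∧ (∀ D ∈ Par M1 C, M1.R D = M2.R D) ∧
    (∀ p c u1 u2, Ctx M1 u1 → Ctx M2 u2 →
      (sat M1 u1 (Par M1 C) p C c ↔ sat M2 u2 (Par M2 C) p C c)))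

/-- The combined model takes `C`'s data from `M1` iff `C` appears in `M1` and
either does not appear in `M2` or `M1` dominates on `C`. -/
def take1 (M1 M2 : CModel) (C : ℕ) : Prop :=
  C ∈ vars M1 ∧ (C ∉ vars M2 ∨ canExplain M1 M2 C)

/-- The combination `M1 ⊕' M2`. -/
noncomputable def combine (M1 M2 : CModel) : CModel where
  U := {C | (take1 M1 M2 C ∧ C ∈ M1.U) ∨ (¬ take1 M1 M2 C ∧ C ∈ M2.U)}
  V := {C | (take1 M1 M2 C ∧ C ∈ M1.V) ∨ (¬ take1 M1 M2 C ∧ C ∈ M2.V)}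
  R := fun C => if take1 M1 M2 C then M1.R C else M2.R C
  F := fun C => if take1 M1 M2 C then M1.F C else M2.F C
  G := fun C => if take1 M1 M2 C then M1.G C else M2.G C

/-- Model equality: same variable sets and `≡_C` for every variable. -/
def mequiv (M1 M2 : CModel) : Prop :=
  M1.U = M2.U ∧ M1.V = M2.V ∧ ∀ C ∈ vars M1, equivC M1 M2 C

/-- Dominance: `M1 ⪰ M2` iff `M1 ⪰_C M2` for every variable `C` of `M2`. -/
def dominates (M1 M2 : CModel) : Prop :=
  ∀ C ∈ vars M2, canExplain M1 M2 C

end CModel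

open CModel

/-!
Let `C = A xor B`. In the model where `A` and `B` are both copies of an exogenous `D`, `C` is
always `0` unless `A` and `B` are intervened on; under an intervention on the focus `{A, B}` it
reproduces the bare xor gate. The bare xor gate, left alone, reaches both values of `C`, as does
the model in which `C` is exogenous with empty focus. That empty focus is also the one under which
the first model is compared with the third, and without intervention it is stuck at `C = 0`.
-/

namespace CModel

variable {M : CModel}

theorem mem_of_isParent {S : Set ℕ} {B C : ℕ} (hF : DependsOn (M.F C) S)
    (h : isParent M B C) : B ∈ S := by
  obtain ⟨-, -, -, s, b₁, b₂, -, -, hne⟩ := h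
  by_contra hB
  exact hne <| hF fun v hv => by
    simp [Function.update_of_ne (ne_of_mem_of_not_mem hv hB)]

theorem acyclic_of_rank (rank : ℕ → ℕ) (h : ∀ B C, isParent M B C → rank B < rank C) :
    Acyclic M := fun v hv =>
  lt_irrefl (rank v) <| by simpa only [Relation.transGen_eq_self] using hv.lift rank h

theorem acyclic_of_dependsOn_focus (rank : ℕ → ℕ)
    (hF : ∀ C ∈ M.V, DependsOn (M.F C) (M.G C))
    (hG : ∀ C ∈ M.V, ∀ B ∈ M.G C, rank B < rank C) : Acyclic M :=
  acyclic_of_rank rank fun B C h => hG C h.2.2.1 B (mem_of_isParent (hF C h.2.2.1) h)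

theorem eq_of_sat_of_mem_U {u : ℕ → ℕ} {X : Set ℕ} {x : ℕ → ℕ} {C c : ℕ} (hC : C ∈ M.U)
    (hCX : C ∉ X) (h : sat M u X x C c) : c = u C := by
  obtain ⟨s, ⟨-, hU, -⟩, rfl⟩ := h
  exact hU C hC hCX

end CModel

def xorVal (a b : ℕ) : ℕ := if a = b then 0 else 1

theorem xorVal_zero_left {c : ℕ} (hc : c ∈ ({0, 1} : Set ℕ)) : xorVal 0 c = c := by
  rcases hc with rfl | rfl <;> rfl

theorem binary_range : ({0, 1} : Set ℕ).Finite ∧ 1 < ({0, 1} : Set ℕ).ncard := by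
  simp

-- Variables: `A = 0`, `B = 1`, `C = 2`, `D = 3`; every variable is binary.

def xorGate : CModel where
  U := {0, 1}
  V := {2}
  R := fun _ => {0, 1}
  F := fun _ s => xorVal (s 0) (s 1)
  G := fun v => if v = 2 then {0, 1} else ∅

def copyGate : CModel where
  U := {2, 3}
  V := {0, 1}
  R := fun _ => {0, 1}
  F := fun _ s => s 3
  G := fun v => if v = 0 ∨ v = 1 then {3} else ∅

def xorOfCopies : CModel where
  U := {3}
  V := {0, 1, 2}
  R := fun _ => {0, 1}
  F := fun v s => if v = 2 then xorVal (s 0) (s 1) else s 3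
  G := fun v => if v = 2 then {0, 1} else if v = 0 ∨ v = 1 then {3} else ∅

theorem xorGate_dependsOn_focus : ∀ C ∈ xorGate.V, DependsOn (xorGate.F C) (xorGate.G C) := by
  rintro C rfl s t h
  simp [xorGate] at h ⊢
  simp [h]

theorem copyGate_dependsOn_focus :
    ∀ C ∈ copyGate.V, DependsOn (copyGate.F C) (copyGate.G C) := by
  rintro C (rfl | rfl) s t h <;> simpa [copyGate] using h

theorem xorOfCopies_dependsOn_focus :
    ∀ C ∈ xorOfCopies.V, DependsOn (xorOfCopies.F C) (xorOfCopies.G C) := by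
  rintro C (rfl | rfl | rfl) s t h <;> simp [xorOfCopies] at h ⊢ <;> simp [h]

theorem wf_xorGate : WF xorGate := by
  refine ⟨?_, ?_, ?_, ?_, ?_, fun _ _ => binary_range, ?_, ?_,
    fun C hC _ => mem_of_isParent (xorGate_dependsOn_focus C hC)⟩ <;>
    simp [xorGate, vars, Set.subset_def]

theorem wf_copyGate : WF copyGate := by
  refine ⟨?_, ?_, ?_, ?_, ?_, fun _ _ => binary_range, ?_, ?_,
    fun C hC _ => mem_of_isParent (copyGate_dependsOn_focus C hC)⟩ <;>
    simp [copyGate, vars, Set.subset_def]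

theorem wf_xorOfCopies : WF xorOfCopies := by
  refine ⟨?_, ?_, ?_, ?_, ?_, fun _ _ => binary_range, ?_, ?_,
    fun C hC _ => mem_of_isParent (xorOfCopies_dependsOn_focus C hC)⟩ <;>
    simp [xorOfCopies, vars, Set.subset_def]
  grind

-- `D` below the copies `A`, `B`, which lie below `C`.
def layer (v : ℕ) : ℕ := if v = 3 then 0 else if v = 2 then 2 else 1

theorem acyclic_xorGate : Acyclic xorGate :=
  acyclic_of_dependsOn_focus layer xorGate_dependsOn_focus <| by
    rintro C rfl B hB
    rcases hB with rfl | rfl <;> simp [layer]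

theorem acyclic_copyGate : Acyclic copyGate :=
  acyclic_of_dependsOn_focus layer copyGate_dependsOn_focus <| by
    rintro C (rfl | rfl) B hB <;> simp_all [copyGate, layer]

theorem acyclic_xorOfCopies : Acyclic xorOfCopies :=
  acyclic_of_dependsOn_focus layer xorOfCopies_dependsOn_focus <| by
    rintro C (rfl | rfl | rfl) B hB <;> simp [xorOfCopies] at hB <;>
      rcases hB with rfl | rfl <;> simp [layer]

theorem xorGate_sat_pair {u x : ℕ → ℕ} {c : ℕ} (h : sat xorGate u {0, 1} x 2 c) :
    c = xorVal (x 0) (x 1) := by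
  obtain ⟨s, ⟨hX, -, hV⟩, rfl⟩ := h
  rw [hV 2 rfl (by simp)]
  exact congrArg₂ xorVal (hX 0 (by simp)) (hX 1 (by simp))

theorem xorOfCopies_sat_pair (u x : ℕ → ℕ) :
    sat xorOfCopies u {0, 1} x 2 (xorVal (x 0) (x 1)) := by
  refine ⟨fun v => if v = 2 then xorVal (x 0) (x 1) else if v = 3 then u 3 else x v,
    ⟨?_, ?_, ?_⟩, rfl⟩
  · rintro v (rfl | rfl) <;> rfl
  · rintro v rfl -
    rfl
  · rintro v (rfl | rfl | rfl) hv <;> simp_all [xorOfCopies]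

theorem xorGate_sat_empty (u x : ℕ → ℕ) : sat xorGate u ∅ x 2 (xorVal (u 0) (u 1)) := by
  refine ⟨fun v => if v = 2 then xorVal (u 0) (u 1) else u v, ⟨?_, ?_, ?_⟩, rfl⟩
  · simp
  · rintro v (rfl | rfl) - <;> rfl
  · rintro v rfl -
    rfl

theorem copyGate_sat_empty (u x : ℕ → ℕ) : sat copyGate u ∅ x 2 (u 2) := by
  refine ⟨fun v => if v = 0 ∨ v = 1 then u 3 else u v, ⟨?_, ?_, ?_⟩, rfl⟩
  · simp
  · rintro v (rfl | rfl) - <;> rfl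
  · rintro v (rfl | rfl) - <;> rfl

theorem xorOfCopies_sat_empty {u x : ℕ → ℕ} {c : ℕ} (h : sat xorOfCopies u ∅ x 2 c) :
    c = 0 := by
  obtain ⟨s, ⟨-, -, hV⟩, rfl⟩ := h
  have hA : s 0 = s 3 := hV 0 (by simp [xorOfCopies]) (by simp)
  have hB : s 1 = s 3 := hV 1 (by simp [xorOfCopies]) (by simp)
  rw [hV 2 (by simp [xorOfCopies]) (by simp)]
  simp [xorOfCopies, xorVal, hA, hB]

theorem copyGate_focus : copyGate.G 2 = ∅ := by simp [copyGate]

theorem xorOfCopies_canExplain_xorGate : canExplain xorOfCopies xorGate 2 := by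
  have hG : xorGate.G 2 = {0, 1} := by simp [xorGate]
  refine ⟨rfl, by simp [xorOfCopies, hG], fun u x c _ _ h => ?_⟩
  rw [hG] at h ⊢
  exact ⟨fun _ => 0, by simp [Ctx, xorOfCopies], xorGate_sat_pair h ▸ xorOfCopies_sat_pair _ x⟩

theorem xorGate_canExplain_copyGate : canExplain xorGate copyGate 2 := by
  refine ⟨rfl, by simp [copyGate_focus], fun u x c hu _ h => ?_⟩
  rw [copyGate_focus] at h ⊢
  have hc : c ∈ ({0, 1} : Set ℕ) :=
    eq_of_sat_of_mem_U (by simp [copyGate]) (Set.notMem_empty 2) h ▸ hu 2 (by simp [copyGate])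
  refine ⟨fun v => if v = 1 then c else 0, ?_, ?_⟩
  · rintro v (rfl | rfl) <;> simp [xorGate, hc]
  · simpa [xorVal_zero_left hc] using xorGate_sat_empty (fun v => if v = 1 then c else 0) x

theorem not_xorOfCopies_canExplain_copyGate : ¬ canExplain xorOfCopies copyGate 2 := by
  rintro ⟨-, -, h⟩
  obtain ⟨u, -, hsat⟩ := h (fun _ => 1) (fun _ => 0) 1 (fun _ _ => by simp [copyGate])
    (by simp [copyGate_focus]) (copyGate_focus ▸ copyGate_sat_empty _ _)
  rw [copyGate_focus] at hsat
  exact one_ne_zero (xorOfCopies_sat_empty hsat)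

/-- without `C`-compatibility, `⪰_C` is not transitive. -/
theorem canExplain_not_trans : ∃ (N1 N2 N3 : CModel) (C : ℕ),
    WF N1 ∧ WF N2 ∧ WF N3 ∧ Acyclic N1 ∧ Acyclic N2 ∧ Acyclic N3 ∧
    canExplain N1 N2 C ∧ canExplain N2 N3 C ∧ ¬ canExplain N1 N3 C :=
  ⟨xorOfCopies, xorGate, copyGate, 2, wf_xorOfCopies, wf_xorGate, wf_copyGate,
    acyclic_xorOfCopies, acyclic_xorGate, acyclic_copyGate, xorOfCopies_canExplain_xorGate,
    xorGate_canExplain_copyGate, not_xorOfCopies_canExplain_copyGate⟩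
end

section
/- There exist two acyclic causal models with focus M1 and M2 that are compatible but whose combination M1 ⊕' M2 is cyclic. Concretely: with four binary variables A, B, C, D, let M1 have exogenous {A, C}, endogenous {B, D}, equations B = A and D = C; let M2 have exogenous {B, D}, endogenous {A, C}, equations A = D and C = B; then M1 and M2 are compatible, both are acyclic, but the parent graph of M1 ⊕' M2 contains the cycle A → B → C → D → A. -/
open scoped Classical

open CModel

/-!
Both models copy values backwards along the 4-cycle `0 → 1 → 2 → 3 → 0`, each endogenous
variable copying an exogenous one, so each model alone uses only half of the edges and every
parent path has length one. Every shared variable is exogenous with empty focus in one of the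
models, where it is explained by the other; so the combination takes each variable's equation
from the model in which it is endogenous and contains all four edges.
-/

namespace CModel

theorem isParent_of_F_eq_eval {M : CModel} {a b r₁ r₂ : ℕ} (hab : a ≠ b) (ha : a ∈ M.vars)
    (hb : b ∈ M.V) (hr₁ : r₁ ∈ M.R a) (hr₂ : r₂ ∈ M.R a) (hr : r₁ ≠ r₂)
    (hF : M.F b = fun s => s a) : isParent M a b :=
  ⟨hab, ha, hb, fun _ => 0, r₁, r₂, hr₁, hr₂, by simpa [hF] using hr⟩

theorem acyclic_of_isParent_mem_U {M : CModel} (hUV : Disjoint M.U M.V)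
    (h : ∀ a b, isParent M a b → a ∈ M.U) : Acyclic M := by
  have endpoints : ∀ a b, Relation.TransGen (fun a b => isParent M a b) a b →
      a ∈ M.U ∧ b ∈ M.V := by
    intro a b hab
    induction hab with
    | single hab => exact ⟨h _ _ hab, hab.2.2.1⟩
    | tail _ hbc ih => exact ⟨ih.1, hbc.2.2.1⟩
  intro v hv
  exact Set.disjoint_left.1 hUV (endpoints v v hv).1 (endpoints v v hv).2

def copyModel (U V : Set ℕ) (σ : ℕ → ℕ) : CModel where
  U := U
  V := V
  R := fun _ => {0, 1}
  F := fun v s => s (σ v)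
  G := fun v => if v ∈ V then {σ v} else ∅

section copyModel

variable {U V : Set ℕ} {σ τ : ℕ → ℕ} {a b C : ℕ}

theorem copyModel_G_of_mem (hC : C ∈ V) : (copyModel U V σ).G C = {σ C} := if_pos hC

theorem copyModel_G_of_notMem (hC : C ∉ V) : (copyModel U V σ).G C = ∅ := if_neg hC

theorem eq_of_isParent_copyModel (h : isParent (copyModel U V σ) a b) : a = σ b := by
  obtain ⟨-, -, -, s, r₁, r₂, -, -, hne⟩ := h
  by_contra hab
  exact hne (by simp [copyModel, Function.update_of_ne (Ne.symm hab)])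

theorem acyclic_copyModel (hUV : Disjoint U V) (hσ : Set.MapsTo σ V U) :
    Acyclic (copyModel U V σ) :=
  acyclic_of_isParent_mem_U hUV fun _ b hab =>
    eq_of_isParent_copyModel hab ▸ hσ (show b ∈ V from hab.2.2.1)

theorem wf_copyModel (hU : U.Finite) (hV : V.Finite) (hU₀ : U.Nonempty) (hV₀ : V.Nonempty)
    (hUV : Disjoint U V) (hσ : Set.MapsTo σ V U) : WF (copyModel U V σ) := by
  refine ⟨hU, hV, hU₀, hV₀, hUV, fun _ _ => ⟨Set.toFinite ({0, 1} : Set ℕ), ?_⟩,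
    fun C => ?_, fun C _ => ?_, fun C hC B hB => ?_⟩
  · simp [copyModel, Set.ncard_pair zero_ne_one]
  · by_cases hC : C ∈ V
    · rw [copyModel_G_of_mem hC, Set.mem_singleton_iff]
      exact fun h => Set.disjoint_left.1 hUV (h ▸ hσ hC) hC
    · simp [copyModel_G_of_notMem hC]
  · by_cases hC : C ∈ V
    · rw [copyModel_G_of_mem hC, Set.singleton_subset_iff]
      exact Or.inl (hσ hC)
    · simp [copyModel_G_of_notMem hC]
  · rw [copyModel_G_of_mem (show C ∈ V from hC)]
    exact eq_of_isParent_copyModel hB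

/-- A constant assignment solves every copy model. -/
theorem canExplain_copyModel_of_mem_U {M : CModel} (hC : C ∈ M.U) (hR : M.R C = {0, 1})
    (hG : M.G C = ∅) : canExplain (copyModel U V σ) M C := by
  refine ⟨hR.symm, hG ▸ Set.empty_subset _, ?_⟩
  rintro u x - hu - ⟨s, ⟨-, hsU, -⟩, rfl⟩
  rw [hG] at hsU ⊢
  have hc : s C ∈ ({0, 1} : Set ℕ) := hsU C hC (Set.notMem_empty C) ▸ hR ▸ hu C hC
  exact ⟨fun _ => s C, fun _ _ => hc, fun _ => s C,
    ⟨fun v hv => absurd hv (Set.notMem_empty v), fun _ _ _ => rfl, fun _ _ _ => rfl⟩, rfl⟩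

theorem compatible_copyModel_swap (hUV : Disjoint U V) :
    compatible (copyModel U V σ) (copyModel V U τ) := by
  rintro C ⟨hC | hC, -⟩
  · exact Or.inr (canExplain_copyModel_of_mem_U hC rfl
      (copyModel_G_of_notMem (Set.disjoint_left.1 hUV hC)))
  · exact Or.inl (canExplain_copyModel_of_mem_U hC rfl
      (copyModel_G_of_notMem (Set.disjoint_right.1 hUV hC)))

theorem take1_copyModel_swap (hUV : Disjoint U V) (hC : C ∈ V) :
    take1 (copyModel U V σ) (copyModel V U τ) C :=
  ⟨Or.inr hC, Or.inr (canExplain_copyModel_of_mem_U hC rfl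
    (copyModel_G_of_notMem (Set.disjoint_right.1 hUV hC)))⟩

theorem not_take1_copyModel_swap (hUV : Disjoint U V) (hC : C ∈ U) :
    ¬ take1 (copyModel U V σ) (copyModel V U τ) C := by
  rintro ⟨-, hC' | ⟨-, hG, -⟩⟩
  · exact hC' (Or.inr hC)
  · have := hG (copyModel_G_of_mem (U := V) hC ▸ Set.mem_singleton (τ C))
    rwa [copyModel_G_of_notMem (Set.disjoint_left.1 hUV hC)] at this

theorem mem_combine_copyModel_swap_V (hUV : Disjoint U V) (hC : C ∈ U ∪ V) :
    C ∈ (combine (copyModel U V σ) (copyModel V U τ)).V := by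
  rcases hC with hC | hC
  · exact Or.inr ⟨not_take1_copyModel_swap hUV hC, hC⟩
  · exact Or.inl ⟨take1_copyModel_swap hUV hC, hC⟩

theorem combine_copyModel_swap_F (hUV : Disjoint U V) (hC : C ∈ U ∪ V) :
    (combine (copyModel U V σ) (copyModel V U τ)).F C = fun s => s (V.piecewise σ τ C) := by
  by_cases h : C ∈ V
  · rw [Set.piecewise_eq_of_mem _ _ _ h]
    exact if_pos (take1_copyModel_swap hUV h)
  · rw [Set.piecewise_eq_of_notMem _ _ _ h]
    exact if_neg (not_take1_copyModel_swap hUV (hC.resolve_right h))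

theorem isParent_combine_copyModel_swap (hUV : Disjoint U V) (ha : a ∈ U ∪ V)
    (hb : b ∈ U ∪ V) (hab : a ≠ b) (h : V.piecewise σ τ b = a) :
    isParent (combine (copyModel U V σ) (copyModel V U τ)) a b :=
  have hR : (combine (copyModel U V σ) (copyModel V U τ)).R a = {0, 1} := ite_self _
  isParent_of_F_eq_eval hab (Or.inr (mem_combine_copyModel_swap_V hUV ha))
    (mem_combine_copyModel_swap_V hUV hb) (hR ▸ Set.mem_insert 0 {1})
    (hR ▸ Set.mem_insert_of_mem 0 rfl) zero_ne_one (h ▸ combine_copyModel_swap_F hUV hb)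

end copyModel

end CModel

def cyclePred (v : ℕ) : ℕ := (v + 3) % 4

theorem disjoint_zero_two_one_three : Disjoint ({0, 2} : Set ℕ) {1, 3} := by simp

theorem transGen_isParent_combine_cyclePred :
    Relation.TransGen (fun a b => isParent (combine (copyModel {0, 2} {1, 3} cyclePred)
      (copyModel {1, 3} {0, 2} cyclePred)) a b) 0 0 := by
  refine (((Relation.TransGen.single (b := 1) ?_).tail (c := 2) ?_).tail (c := 3) ?_).tail ?_ <;>
    exact isParent_combine_copyModel_swap disjoint_zero_two_one_three (by simp) (by simp)
      (by decide) (by simp [cyclePred])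

/-- two compatible acyclic models whose combination is cyclic. -/
theorem combine_can_be_cyclic : ∃ (M1 M2 : CModel) (A B C D : ℕ),
    A ≠ B ∧ A ≠ C ∧ A ≠ D ∧ B ≠ C ∧ B ≠ D ∧ C ≠ D ∧
    WF M1 ∧ WF M2 ∧ Acyclic M1 ∧ Acyclic M2 ∧ compatible M1 M2 ∧
    M1.U = {A, C} ∧ M1.V = {B, D} ∧ M2.U = {B, D} ∧ M2.V = {A, C} ∧
    (∀ v ∈ ({A, B, C, D} : Set ℕ), M1.R v = {0, 1} ∧ M2.R v = {0, 1}) ∧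
    M1.G A = ∅ ∧ M1.G C = ∅ ∧ M2.G B = ∅ ∧ M2.G D = ∅ ∧
    M1.G B = {A} ∧ M1.G D = {C} ∧ M2.G A = {D} ∧ M2.G C = {B} ∧
    (∀ s, M1.F B s = s A ∧ M1.F D s = s C ∧ M2.F A s = s D ∧ M2.F C s = s B) ∧
    Relation.TransGen (fun a b => isParent (combine M1 M2) a b) A A ∧
    ¬ Acyclic (combine M1 M2) := by
  have hσ₁ : Set.MapsTo cyclePred {1, 3} {0, 2} := by simp [Set.MapsTo, cyclePred]
  have hσ₂ : Set.MapsTo cyclePred {0, 2} {1, 3} := by simp [Set.MapsTo, cyclePred]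
  have hUV := disjoint_zero_two_one_three
  have cycle := transGen_isParent_combine_cyclePred
  refine ⟨copyModel {0, 2} {1, 3} cyclePred, copyModel {1, 3} {0, 2} cyclePred, 0, 1, 2, 3,
    by decide, by decide, by decide, by decide, by decide, by decide,
    wf_copyModel (Set.toFinite _) (Set.toFinite _) (by simp) (by simp) hUV hσ₁,
    wf_copyModel (Set.toFinite _) (Set.toFinite _) (by simp) (by simp) hUV.symm hσ₂,
    acyclic_copyModel hUV hσ₁, acyclic_copyModel hUV.symm hσ₂, compatible_copyModel_swap hUV,
    rfl, rfl, rfl, rfl, fun _ _ => ⟨rfl, rfl⟩, copyModel_G_of_notMem (by simp),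
    copyModel_G_of_notMem (by simp), copyModel_G_of_notMem (by simp),
    copyModel_G_of_notMem (by simp), copyModel_G_of_mem (by simp), copyModel_G_of_mem (by simp),
    copyModel_G_of_mem (by simp), copyModel_G_of_mem (by simp), fun _ => ⟨rfl, rfl, rfl, rfl⟩,
    cycle, fun h => h 0 cycle⟩
end

section
/- Determining whether M1 ⪰_C M2 is Π₂ᵖ-hard, even when all variables are binary: for every closed quantified Boolean formula ∀X ∃Y φ, the formula is true if and only if M1 ⪰_C M2, where M2 has exogenous binary variables X and endogenous binary C with constant equation C = true and G2(C) = X, and M1 has exogenous binary variables X ∪ Y, endogenous C with equation C = φ and G1(C) = X ∪ Y. -/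
open scoped Classical

namespace CModel

/-!
Since `C` is constantly `1` in `M2`, `M1 ⪰_C M2` says that every binary intervention
`X ← x` can be answered by a context of `M1` in which `C = 1`. As `C ∉ X ∪ Y`, every
solution of `M1` agrees with `x` on `X` and with the context on `Y`, so `C = 1` exactly when
`φ` holds there: the `Y`-part of the context is the witness `y` of the QBF.
-/

/-- The model `M2` of the reduction. -/
def constTrueModel (X : Set ℕ) (C : ℕ) : CModel :=
  ⟨X, {C}, fun _ => {0, 1}, fun v _ => if v = C then 1 else 0, fun v => if v = C then X else ∅⟩

/-- The model `M1` of the reduction. -/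
def formulaModel (X Y : Set ℕ) (C : ℕ) (φ : (ℕ → ℕ) → Bool) : CModel :=
  ⟨X ∪ Y, {C}, fun _ => {0, 1}, fun v s => if v = C then (if φ s then 1 else 0) else 0,
    fun v => if v = C then X ∪ Y else ∅⟩

lemma sat_constTrueModel_iff {X : Set ℕ} {C : ℕ} (hC : C ∉ X) (u x : ℕ → ℕ) (c : ℕ) :
    sat (constTrueModel X C) u X x C c ↔ c = 1 := by
  constructor
  · rintro ⟨s, ⟨-, -, hsV⟩, rfl⟩
    simpa [constTrueModel] using hsV C rfl hC
  · rintro rfl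
    refine ⟨Function.update x C 1, ⟨fun v hv => ?_, fun v hv hvX => absurd hv hvX,
      fun v hv _ => ?_⟩, by simp⟩
    · rw [Function.update_of_ne (ne_of_mem_of_not_mem hv hC)]
    · obtain rfl : v = C := hv
      simp [constTrueModel]

lemma canExplain_constTrueModel_iff {M : CModel} {X : Set ℕ} {C : ℕ} (hC : C ∉ X)
    (hR : M.R C = {0, 1}) (hG : X ⊆ M.G C) :
    canExplain M (constTrueModel X C) C ↔
      ∀ x : ℕ → ℕ, (∀ v ∈ X, x v ∈ ({0, 1} : Set ℕ)) → ∃ u, Ctx M u ∧ sat M u X x C 1 := by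
  have hGC : (constTrueModel X C).G C = X := if_pos rfl
  simp only [canExplain, hGC, sat_constTrueModel_iff hC]
  refine ⟨fun ⟨_, _, h⟩ x hx => h (fun _ => 0) x 1 (fun v _ => by simp [constTrueModel]) hx rfl,
    fun h => ⟨hR, hG, ?_⟩⟩
  rintro u x c - hx rfl
  exact h x hx

lemma sat_formulaModel_iff {X Y : Set ℕ} {C : ℕ} (hC : C ∉ X ∪ Y) {φ : (ℕ → ℕ) → Bool}
    (hdep : ∀ s t : ℕ → ℕ, (∀ v ∈ X ∪ Y, s v = t v) → φ s = φ t) (u x : ℕ → ℕ) :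
    sat (formulaModel X Y C φ) u X x C 1 ↔ φ (X.piecewise x u) = true := by
  have hCX : C ∉ X := fun h => hC (Or.inl h)
  constructor
  · rintro ⟨s, ⟨hsX, hsU, hsV⟩, hsC⟩
    have hφs : φ s = true := by
      by_contra hφ
      simpa [formulaModel, hφ, hsC] using hsV C rfl hCX
    rw [← hφs]
    refine hdep _ _ fun v hv => ?_
    by_cases hvX : v ∈ X
    · rw [Set.piecewise_eq_of_mem _ _ _ hvX, hsX v hvX]
    · rw [Set.piecewise_eq_of_notMem _ _ _ hvX, hsU v hv hvX]
  · intro h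
    set s := Function.update (X.piecewise x u) C 1
    have hs : ∀ v ∈ X ∪ Y, s v = X.piecewise x u v := fun v hv =>
      Function.update_of_ne (ne_of_mem_of_not_mem hv hC) _ _
    refine ⟨s, ⟨fun v hv => ?_, fun v hv hvX => ?_, fun v hv _ => ?_⟩, by simp [s]⟩
    · rw [hs v (Or.inl hv), Set.piecewise_eq_of_mem _ _ _ hv]
    · rw [hs v hv, Set.piecewise_eq_of_notMem _ _ _ hvX]
    · obtain rfl : v = C := hv
      simp [formulaModel, s, hdep s _ hs, h]

lemma exists_ctx_formulaModel_iff (X Y : Set ℕ) (C : ℕ) (φ : (ℕ → ℕ) → Bool) (x : ℕ → ℕ)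
    (hx : ∀ v ∈ X, x v ∈ ({0, 1} : Set ℕ)) :
    (∃ u, Ctx (formulaModel X Y C φ) u ∧ φ (X.piecewise x u) = true) ↔
      ∃ y : ℕ → ℕ, (∀ v ∈ Y, y v ∈ ({0, 1} : Set ℕ)) ∧ φ (X.piecewise x y) = true := by
  constructor
  · rintro ⟨u, hu, h⟩
    exact ⟨u, fun v hv => hu v (Or.inr hv), h⟩
  · rintro ⟨y, hy, h⟩
    have hidem : X.piecewise x (X.piecewise x y) = X.piecewise x y := by
      funext v
      by_cases hvX : v ∈ X <;> simp [hvX]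
    refine ⟨X.piecewise x y, fun v hv => ?_, by rwa [hidem]⟩
    by_cases hvX : v ∈ X
    · rw [Set.piecewise_eq_of_mem _ _ _ hvX]
      exact hx v hvX
    · rw [Set.piecewise_eq_of_notMem _ _ _ hvX]
      exact hy v (hv.resolve_left hvX)

end CModel

open CModel

theorem pi2_hardness_reduction_general (X Y : Set ℕ)
    (C : ℕ) (hC : C ∉ X ∪ Y)
    (φ : (ℕ → ℕ) → Bool)
    (hdep : ∀ s t : ℕ → ℕ, (∀ v ∈ X ∪ Y, s v = t v) → φ s = φ t) :
    (∀ x : ℕ → ℕ, (∀ v ∈ X, x v ∈ ({0, 1} : Set ℕ)) →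
      ∃ y : ℕ → ℕ, (∀ v ∈ Y, y v ∈ ({0, 1} : Set ℕ)) ∧
        φ (fun v => if v ∈ X then x v else y v) = true) ↔
    canExplain
      ⟨X ∪ Y, {C}, fun _ => {0, 1},
        fun v s => if v = C then (if φ s then 1 else 0) else 0,
        fun v => if v = C then X ∪ Y else ∅⟩
      ⟨X, {C}, fun _ => {0, 1},
        fun v _ => if v = C then 1 else 0,
        fun v => if v = C then X else ∅⟩
      C := by
  change _ ↔ canExplain (formulaModel X Y C φ) (constTrueModel X C) C
  rw [canExplain_constTrueModel_iff (fun h => hC (Or.inl h)) rfl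
    (by simp [formulaModel])]
  refine forall₂_congr fun x hx => ?_
  simp only [sat_formulaModel_iff hC hdep]
  exact (exists_ctx_formulaModel_iff X Y C φ x hx).symm

/-- hardness reduction: the closed QBF (for all X exists Y, phi)
is true iff M1 can explain M2 with respect to C, for the constructed binary models. -/
theorem pi2_hardness_reduction (X Y : Set ℕ) (hXf : X.Finite) (hYf : Y.Finite)
    (hXY : Disjoint X Y) (hXne : X.Nonempty) (hYne : Y.Nonempty)
    (C : ℕ) (hC : C ∉ X ∪ Y)
    (φ : (ℕ → ℕ) → Bool)
    (hdep : ∀ s t : ℕ → ℕ, (∀ v ∈ X ∪ Y, s v = t v) → φ s = φ t) :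
    (∀ x : ℕ → ℕ, (∀ v ∈ X, x v ∈ ({0, 1} : Set ℕ)) →
      ∃ y : ℕ → ℕ, (∀ v ∈ Y, y v ∈ ({0, 1} : Set ℕ)) ∧
        φ (fun v => if v ∈ X then x v else y v) = true) ↔
    canExplain
      ⟨X ∪ Y, {C}, fun _ => {0, 1},
        fun v s => if v = C then (if φ s then 1 else 0) else 0,
        fun v => if v = C then X ∪ Y else ∅⟩
      ⟨X, {C}, fun _ => {0, 1},
        fun v _ => if v = C then 1 else 0,
        fun v => if v = C then X else ∅⟩
      C :=
  pi2_hardness_reduction_general X Y C hC φ hdep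
end
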